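/- arXiv:1309.2982 — 5 statements merged into one kernel-verified Lean document; each statement's English description precedes it below -/
import Mathlib

section
/- Let $0 \le a_T < \cdots < a_1 < 1 < b_1 < \cdots < b_T$ and let $\alpha = \min_{1\le i\le T}\{a_{i-1}-a_i, b_i - b_{i-1}\} > 0$ (with $a_0=b_0=1$). Suppose $H = (H_0, H_1(s_1), \ldots, H_{T-1}(s_1,\ldots,s_{T-1}))$ is a family of real-valued functions ($H_i$ defined on $\prod_{j=1}^i [a_j,b_j]$) and $C > 0$ is such that $\sum_{i=0}^{T-1} H_i(s_1,\ldots,s_i)(s_{i+1}-s_i) > -C$ for all paths $(s_0=1, s_1, \ldots, s_T)$ with $s_i \in [a_i, b_i]$. Then there exists $M = M(C, \alpha, (a_i), (b_i)) > 0$, independent of $H$, such that $|H_i(s_1,\ldots,s_i)| \le M$ for all $i$ and all admissible $(s_1,\ldots,s_i)$. -/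
/-!
Let `α` be the smallest gap between consecutive intervals. Holding a path from time `m + 1` on at
the value `s_m + α` or `s_m - α` gives an admissible path whose terminal gains are `G_m ± α H_m`,
where `G_m` is the gains up to time `m`; the lower bound `-C` therefore gives
`|H_m| α < C + G_m`. Since every increment of a path is at most `D = b_T - a_T`, this yields
`C + G_{m+1} ≤ (1 + D / α) (C + G_m)`, hence `C + G_m ≤ (1 + D / α)^m C` and
`|H_m| ≤ (1 + D / α)^T C / α`.
-/

open Set Filter Topology

lemma strictAntiOn_Iic_of_lt_sub_one {β : Type*} [Preorder β] {f : ℕ → β} {T : ℕ}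
    (hf : ∀ i, 1 ≤ i → i ≤ T → f i < f (i - 1)) : StrictAntiOn f (Iic T) :=
  strictAntiOn_Iic_of_succ_lt fun m hm => by
    simpa [Order.succ_eq_add_one] using hf (m + 1) (by omega) hm

lemma strictMonoOn_Iic_of_sub_one_lt {β : Type*} [Preorder β] {f : ℕ → β} {T : ℕ}
    (hf : ∀ i, 1 ≤ i → i ≤ T → f (i - 1) < f i) : StrictMonoOn f (Iic T) :=
  strictMonoOn_Iic_of_lt_succ fun m hm => by
    simpa [Order.succ_eq_add_one] using hf (m + 1) (by omega) hm

lemma exists_pos_forall_lt_of_pos {ι : Type*} (I : Finset ι) {f : ι → ℝ}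
    (hf : ∀ i ∈ I, 0 < f i) : ∃ ε > 0, ∀ i ∈ I, ε < f i := by
  have hsmall : ∀ᶠ ε in 𝓝[>] (0 : ℝ), ∀ i ∈ I, ε < f i :=
    (eventually_all_finset I).2 fun i hi => nhdsWithin_le_nhds (eventually_lt_nhds (hf i hi))
  exact (hsmall.and self_mem_nhdsWithin).exists.imp fun ε h => ⟨h.2, h.1⟩

lemma abs_mul_lt_add_of_neg_lt {R : Type*} [CommRing R] [LinearOrder R] [IsStrictOrderedRing R]
    {h g α C : R} (hplus : -C < g + h * α) (hminus : -C < g - h * α) : |h| * α < C + g := by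
  rcases abs_cases h with ⟨habs, -⟩ | ⟨habs, -⟩ <;> rw [habs] <;> linarith

lemma exists_pos_lt_gaps {a b : ℕ → ℝ} {T : ℕ} (ha : StrictAntiOn a (Iic T))
    (hb : StrictMonoOn b (Iic T)) :
    ∃ α > 0, ∀ m < T, α < a m - a (m + 1) ∧ α < b (m + 1) - b m := by
  obtain ⟨α, hα, hgap⟩ := exists_pos_forall_lt_of_pos (Finset.range T)
    (f := fun m => min (a m - a (m + 1)) (b (m + 1) - b m)) fun m hm => by
      have hm' : m + 1 ∈ Iic T := mem_Iic.2 (Finset.mem_range.1 hm)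
      exact lt_min (sub_pos.2 (ha (mem_Iic.2 (Nat.le_of_succ_le hm')) hm' m.lt_succ_self))
        (sub_pos.2 (hb (mem_Iic.2 (Nat.le_of_succ_le hm')) hm' m.lt_succ_self))
  exact ⟨α, hα, fun m hm => lt_min_iff.1 (hgap m (Finset.mem_range.2 hm))⟩

def gains (H : ℕ → (ℕ → ℝ) → ℝ) (s : ℕ → ℝ) (n : ℕ) : ℝ :=
  ∑ k ∈ Finset.range n, H k s * (s (k + 1) - s k)

lemma gains_zero (H : ℕ → (ℕ → ℝ) → ℝ) (s : ℕ → ℝ) : gains H s 0 = 0 := Finset.sum_range_zero _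

lemma gains_succ (H : ℕ → (ℕ → ℝ) → ℝ) (s : ℕ → ℝ) (n : ℕ) :
    gains H s (n + 1) = gains H s n + H n s * (s (n + 1) - s n) :=
  Finset.sum_range_succ _ _

def holdAfter (s : ℕ → ℝ) (m : ℕ) (x : ℝ) : ℕ → ℝ := fun j => if j ≤ m then s j else x

section holdAfter

variable {s : ℕ → ℝ} {m j : ℕ} {x : ℝ}

lemma holdAfter_of_le (hj : j ≤ m) : holdAfter s m x j = s j := if_pos hj

lemma holdAfter_of_lt (hj : m < j) : holdAfter s m x j = x := if_neg (Nat.not_le.2 hj)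

lemma holdAfter_mem {T : ℕ} {I : ℕ → Set ℝ} (hI : MonotoneOn I (Iic T))
    (hs : ∀ j ≤ T, s j ∈ I j) (hx : x ∈ I (m + 1)) : ∀ j ≤ T, holdAfter s m x j ∈ I j := by
  intro j hj
  rcases le_or_gt j m with hjm | hmj
  · rw [holdAfter_of_le hjm]
    exact hs j hj
  · rw [holdAfter_of_lt hmj]
    exact hI (mem_Iic.2 (by omega)) (mem_Iic.2 hj) hmj hx

lemma gains_holdAfter {H : ℕ → (ℕ → ℝ) → ℝ} {n : ℕ}
    (hH : ∀ k ≤ m, ∀ s s' : ℕ → ℝ, (∀ j ≤ k, s j = s' j) → H k s = H k s') (hmn : m < n) :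
    gains H (holdAfter s m x) n = gains H s m + H m s * (x - s m) := by
  have hHk : ∀ k ≤ m, H k (holdAfter s m x) = H k s := fun k hk =>
    hH k hk _ s fun j hj => holdAfter_of_le (hj.trans hk)
  obtain ⟨r, rfl⟩ := Nat.exists_eq_add_of_le (Nat.succ_le_of_lt hmn)
  have hfrozen : ∀ k ∈ Finset.range r, H (m + 1 + k) (holdAfter s m x)
      * (holdAfter s m x (m + 1 + k + 1) - holdAfter s m x (m + 1 + k)) = 0 := fun k _ => by
    rw [holdAfter_of_lt (by omega), holdAfter_of_lt (by omega), sub_self, mul_zero]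
  rw [gains, Finset.sum_range_add, Finset.sum_eq_zero hfrozen, add_zero, ← gains, gains_succ,
    hHk m le_rfl, holdAfter_of_le le_rfl, holdAfter_of_lt m.lt_succ_self]
  congr 1
  refine Finset.sum_congr rfl fun k hk => ?_
  rw [Finset.mem_range] at hk
  rw [hHk k hk.le, holdAfter_of_le hk.le, holdAfter_of_le hk]

end holdAfter

lemma add_gains_le_pow_mul {H : ℕ → (ℕ → ℝ) → ℝ} {s : ℕ → ℝ} {C α D : ℝ} {n : ℕ}
    (hα : 0 < α) (hD : 0 ≤ D) (hinc : ∀ k < n, |s (k + 1) - s k| ≤ D)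
    (hH : ∀ k < n, |H k s| * α < C + gains H s k) :
    C + gains H s n ≤ (1 + D / α) ^ n * C := by
  have hstep : ∀ k < n, C + gains H s (k + 1) ≤ (1 + D / α) * (C + gains H s k) := by
    intro k hk
    have hHk : |H k s| ≤ (C + gains H s k) / α := (le_div_iff₀ hα).2 (hH k hk).le
    calc C + gains H s (k + 1) = (C + gains H s k) + H k s * (s (k + 1) - s k) := by
          rw [gains_succ]; ring
      _ ≤ (C + gains H s k) + |H k s| * D := by
          refine (add_le_add_iff_left _).2 ((le_abs_self _).trans ((abs_mul _ _).trans_le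
            (mul_le_mul_of_nonneg_left (hinc k hk) (abs_nonneg _))))
      _ ≤ (C + gains H s k) + (C + gains H s k) / α * D := by gcongr
      _ = (1 + D / α) * (C + gains H s k) := by ring
  simpa [gains_zero] using le_geom (u := fun k => C + gains H s k) (by positivity) n hstep

def IsAdmissiblePath (a b : ℕ → ℝ) (T : ℕ) (s : ℕ → ℝ) : Prop :=
  ∀ j ≤ T, s j ∈ Icc (a j) (b j)

section IsAdmissiblePath

variable {a b : ℕ → ℝ} {T : ℕ} {s : ℕ → ℝ}

lemma isAdmissiblePath_iff (ha0 : a 0 = 1) (hb0 : b 0 = 1) :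
    IsAdmissiblePath a b T s ↔ s 0 = 1 ∧ ∀ j, 1 ≤ j → j ≤ T → a j ≤ s j ∧ s j ≤ b j := by
  refine ⟨fun hs => ⟨?_, fun j hj0 hjT => hs j hjT⟩, fun ⟨hs0, hs⟩ j hj => ?_⟩
  · simpa [ha0, hb0] using hs 0 (Nat.zero_le T)
  · rcases Nat.eq_zero_or_pos j with rfl | hj0
    · simp [hs0, ha0, hb0]
    · exact hs j hj0 hj

lemma IsAdmissiblePath.abs_sub_le (hI : MonotoneOn (fun j => Icc (a j) (b j)) (Iic T))
    (hs : IsAdmissiblePath a b T s) {k : ℕ} (hk : k < T) :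
    |s (k + 1) - s k| ≤ b T - a T :=
  Real.dist_le_of_mem_Icc (hI (mem_Iic.2 hk) (mem_Iic.2 le_rfl) hk (hs (k + 1) hk))
    (hI (mem_Iic.2 hk.le) (mem_Iic.2 le_rfl) hk.le (hs k hk.le))

lemma IsAdmissiblePath.abs_mul_lt_add_gains {H : ℕ → (ℕ → ℝ) → ℝ} {C α : ℝ} {m : ℕ}
    (hI : MonotoneOn (fun j => Icc (a j) (b j)) (Iic T))
    (hH : ∀ k ≤ m, ∀ s s' : ℕ → ℝ, (∀ j ≤ k, s j = s' j) → H k s = H k s')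
    (hgain : ∀ s, IsAdmissiblePath a b T s → -C < gains H s T)
    (hs : IsAdmissiblePath a b T s) (hm : m < T) (hα : 0 ≤ α)
    (hga : α ≤ a m - a (m + 1)) (hgb : α ≤ b (m + 1) - b m) :
    |H m s| * α < C + gains H s m := by
  have hfreeze : ∀ x ∈ Icc (a (m + 1)) (b (m + 1)), -C < gains H s m + H m s * (x - s m) :=
    fun x hx => gains_holdAfter hH hm ▸ hgain _ (holdAfter_mem hI hs hx)
  have hsm := hs m hm.le
  rw [mem_Icc] at hsm
  refine abs_mul_lt_add_of_neg_lt ?_ ?_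
  · simpa [mul_comm] using hfreeze (s m + α) ⟨by linarith, by linarith⟩
  · simpa [mul_comm, sub_eq_add_neg] using hfreeze (s m - α) ⟨by linarith, by linarith⟩

end IsAdmissiblePath

theorem stmt0_general (T : ℕ) (a b : ℕ → ℝ)
    (ha0 : a 0 = 1) (hb0 : b 0 = 1)
    (hadec : ∀ i, 1 ≤ i → i ≤ T → a i < a (i - 1))
    (hbinc : ∀ i, 1 ≤ i → i ≤ T → b (i - 1) < b i)
    (C : ℝ) (hC : 0 < C) :
    ∃ M > (0 : ℝ), ∀ H : ℕ → (ℕ → ℝ) → ℝ,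
      (∀ i, i < T → ∀ s s' : ℕ → ℝ, (∀ j, j ≤ i → s j = s' j) → H i s = H i s') →
      (∀ s : ℕ → ℝ, s 0 = 1 → (∀ i, 1 ≤ i → i ≤ T → a i ≤ s i ∧ s i ≤ b i) →
        -C < ∑ i ∈ Finset.range T, H i s * (s (i + 1) - s i)) →
      ∀ i, i < T → ∀ s : ℕ → ℝ, s 0 = 1 →
        (∀ j, 1 ≤ j → j ≤ T → a j ≤ s j ∧ s j ≤ b j) →
        |H i s| ≤ M := by
  have ha := strictAntiOn_Iic_of_lt_sub_one hadec
  have hb := strictMonoOn_Iic_of_sub_one_lt hbinc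
  have hI : MonotoneOn (fun j => Icc (a j) (b j)) (Iic T) := fun i hi j hj hij =>
    Icc_subset_Icc (ha.antitoneOn hi hj hij) (hb.monotoneOn hi hj hij)
  obtain ⟨α, hα, hgap⟩ := exists_pos_lt_gaps ha hb
  have hD : 0 ≤ b T - a T := by
    have := ha.antitoneOn (mem_Iic.2 (Nat.zero_le T)) (mem_Iic.2 le_rfl) (Nat.zero_le T)
    have := hb.monotoneOn (mem_Iic.2 (Nat.zero_le T)) (mem_Iic.2 le_rfl) (Nat.zero_le T)
    linarith
  refine ⟨(1 + (b T - a T) / α) ^ T * C / α, by positivity, ?_⟩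
  intro H hH hgain i hi s hs0 hs
  have hadm : ∀ s, IsAdmissiblePath a b T s → -C < gains H s T := fun s hs =>
    ((isAdmissiblePath_iff ha0 hb0).1 hs).elim (hgain s)
  have hpath : IsAdmissiblePath a b T s := (isAdmissiblePath_iff ha0 hb0).2 ⟨hs0, hs⟩
  have hbound : ∀ m < T, |H m s| * α < C + gains H s m := fun m hm =>
    hpath.abs_mul_lt_add_gains hI (fun k hk => hH k (by omega)) hadm hm hα.le
      (hgap m hm).1.le (hgap m hm).2.le
  rw [le_div_iff₀ hα]
  calc |H i s| * α ≤ C + gains H s i := (hbound i hi).le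
    _ ≤ (1 + (b T - a T) / α) ^ i * C :=
      add_gains_le_pow_mul hα hD (fun k hk => hpath.abs_sub_le hI (hk.trans hi))
        (fun k hk => hbound k (hk.trans hi))
    _ ≤ (1 + (b T - a T) / α) ^ T * C := by
      gcongr
      exact le_add_of_nonneg_right (by positivity)

/-- Lemma 4.1: a uniform lower bound on the terminal gains over the compact
path space `Ω = {1} × [a 1, b 1] × ⋯ × [a T, b T]` forces a uniform bound,
independent of the strategy, on the (adapted) trading strategy `H`. -/
theorem stmt0 (T : ℕ) (hT : 0 < T) (a b : ℕ → ℝ)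
    (ha0 : a 0 = 1) (hb0 : b 0 = 1) (haT : 0 ≤ a T)
    (hadec : ∀ i, 1 ≤ i → i ≤ T → a i < a (i - 1))
    (hbinc : ∀ i, 1 ≤ i → i ≤ T → b (i - 1) < b i)
    (C : ℝ) (hC : 0 < C) :
    ∃ M > (0 : ℝ), ∀ H : ℕ → (ℕ → ℝ) → ℝ,
      (∀ i, i < T → ∀ s s' : ℕ → ℝ, (∀ j, j ≤ i → s j = s' j) → H i s = H i s') →
      (∀ s : ℕ → ℝ, s 0 = 1 → (∀ i, 1 ≤ i → i ≤ T → a i ≤ s i ∧ s i ≤ b i) →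
        -C < ∑ i ∈ Finset.range T, H i s * (s (i + 1) - s i)) →
      ∀ i, i < T → ∀ s : ℕ → ℝ, s 0 = 1 →
        (∀ j, 1 ≤ j → j ≤ T → a j ≤ s j ∧ s j ≤ b j) →
        |H i s| ≤ M :=
  stmt0_general T a b ha0 hb0 hadec hbinc C hC
end

section
/- Let $\mu_0, \ldots, \mu_T$ be probability measures on $\mathbb{R}_+$ that are the marginals of a (discrete-time) martingale, i.e., $\int h\, d\mu_i$ is nondecreasing in $i$ for every convex function $h: \mathbb{R}_+ \to \mathbb{R}$ (such that the integrals exist). For each $n$, define probability measures $\mu_i^n$ on the grid $K^n = \{0, 1/2^n, 2/2^n, \ldots\}$ by $\mu_i^n(\{0\}) = \int_0^{1/2^n}(1 - 2^n x)\, d\mu_i(x)$ and $\mu_i^n(\{k/2^n\}) = \int_{(k-1)/2^n}^{k/2^n}(2^n x + 1 - k)\, d\mu_i(x) + \int_{k/2^n}^{(k+1)/2^n}(1 + k - 2^n x)\, d\mu_i(x)$ for $k \ge 1$. Then: (1) each $\mu_i^n$ is a probability measure supported on $K^n$; (2) $\mu_i^n \to \mu_i$ weakly as $n \to \infty$; (3)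 for every convex $h$, $\int h\, d\mu_i^n$ is nondecreasing in $i$, so $\mu_0^n, \ldots, \mu_T^n$ are again in convex increasing order and hence are the marginals of a martingale on $(K^n)^{T+1}$. -/
/-!
Let `w` be the hat function of the grid point `k / 2ⁿ` (height one there, vanishing at the
neighbouring grid points). The mass that `μⁿ` puts on `k / 2ⁿ` is `∫ w dμ`, hence
`∫ h dμⁿ = ∫ hⁿ dμ` with `hⁿ = ∑ₖ h (k / 2ⁿ) w` the piecewise-linear interpolant of `h`.
On `ℝ₊` the hat functions sum to one, so `μⁿ` is a probability measure. If `h` is convex then at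
every point the secant of `h` through the two neighbouring grid points supports `hⁿ`, so `hⁿ` is
convex and the convex order passes to the `μⁿ`. For continuous bounded `h`, `hⁿ → h` pointwise
with `|hⁿ| ≤ sup |h|`, and dominated convergence gives weak convergence.
-/

open MeasureTheory

/-- The discretization of a measure `μ` on `ℝ₊` onto the dyadic grid
`{0, 1/2ⁿ, 2/2ⁿ, …}`: the point `k/2ⁿ` receives the mass
`∫_{[(k-1)/2ⁿ, k/2ⁿ)} (2ⁿx + 1 - k) dμ + ∫_{[k/2ⁿ, (k+1)/2ⁿ)} (1 + k - 2ⁿx) dμ`. -/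
noncomputable def gridMeasure (n : ℕ) (μ : Measure ℝ) : Measure ℝ :=
  Measure.sum fun k : ℕ =>
    (ENNReal.ofReal
      ((∫ x in Set.Ico (((k : ℝ) - 1) / 2 ^ n) ((k : ℝ) / 2 ^ n), (2 ^ n * x + 1 - (k : ℝ)) ∂μ) +
       (∫ x in Set.Ico ((k : ℝ) / 2 ^ n) (((k : ℝ) + 1) / 2 ^ n), (1 + (k : ℝ) - 2 ^ n * x) ∂μ))) •
      Measure.dirac ((k : ℝ) / 2 ^ n)

open Filter Topology Set
open scoped ENNReal

section Convexity

variable {𝕜 : Type*} [Field 𝕜] [LinearOrder 𝕜] [IsStrictOrderedRing 𝕜] {s : Set 𝕜} {f : 𝕜 → 𝕜}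

theorem ConvexOn.secant_le_of_notMem_Ioo (hf : ConvexOn 𝕜 s f) {p q r : 𝕜} (hp : p ∈ s)
    (hq : q ∈ s) (hr : r ∈ s) (hpq : p < q) (hr' : r ∉ Ioo p q) :
    f p + slope f p q * (r - p) ≤ f r := by
  rcases eq_or_ne r p with rfl | hrp
  · simp
  have hmono := hf.slope_mono hp
  rcases hrp.lt_or_gt with hrp | hpr
  · have := hmono ⟨hr, hrp.ne⟩ ⟨hq, hpq.ne'⟩ (hrp.trans hpq).le
    rw [slope_def_field f p r, div_le_iff_of_neg (sub_neg.2 hrp)] at this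
    linarith
  · have := hmono ⟨hq, hpq.ne'⟩ ⟨hr, hpr.ne'⟩ (not_lt.1 fun hrq => hr' ⟨hpr, hrq⟩)
    rw [slope_def_field f p r, le_div_iff₀ (sub_pos.2 hpr)] at this
    linarith

theorem convexOn_of_exists_supporting_line (hs : Convex 𝕜 s)
    (h : ∀ z ∈ s, ∃ a b : 𝕜, a * z + b = f z ∧ ∀ x ∈ s, a * x + b ≤ f x) : ConvexOn 𝕜 s f := by
  refine ⟨hs, fun x hx y hy u v hu hv huv => ?_⟩
  obtain ⟨a, b, hz, hle⟩ := h _ (hs hx hy hu hv huv)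
  rw [← hz, smul_eq_mul, smul_eq_mul, smul_eq_mul, smul_eq_mul]
  calc a * (u * x + v * y) + b = u * (a * x + b) + v * (a * y + b) := by
        linear_combination (-b) * huv
    _ ≤ u * f x + v * f y := by gcongr <;> exact hle _ ‹_›

end Convexity

noncomputable def dyadicTent (n k : ℕ) (x : ℝ) : ℝ := max 0 (1 - |2 ^ n * x - k|)

/-- The piecewise-linear interpolant `hⁿ` of `h` on the grid `{k / 2ⁿ}` (on `x ≥ 0`). -/
noncomputable def gridInterp (g : ℝ → ℝ) (n : ℕ) (x : ℝ) : ℝ :=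
  ∑' k : ℕ, g (k / 2 ^ n) * dyadicTent n k x

section Tent

variable {n k : ℕ} {x : ℝ}

theorem dyadicTent_nonneg : 0 ≤ dyadicTent n k x := le_max_left _ _

theorem dyadicTent_le_one : dyadicTent n k x ≤ 1 :=
  max_le zero_le_one (sub_le_self _ (abs_nonneg _))

@[fun_prop]
theorem continuous_dyadicTent : Continuous (dyadicTent n k) := by
  unfold dyadicTent; fun_prop

theorem integrable_dyadicTent (μ : Measure ℝ) [IsFiniteMeasure μ] :
    Integrable (dyadicTent n k) μ :=
  .of_bound continuous_dyadicTent.aestronglyMeasurable 1 <| ae_of_all _ fun _ => by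
    rw [Real.norm_of_nonneg dyadicTent_nonneg]; exact dyadicTent_le_one

theorem dyadicTent_eq_left (h₁ : k - 1 ≤ 2 ^ n * x) (h₂ : 2 ^ n * x ≤ k) :
    dyadicTent n k x = 2 ^ n * x + 1 - k := by
  rw [dyadicTent, abs_of_nonpos (by linarith), max_eq_right (by linarith)]
  ring

theorem dyadicTent_eq_right (h₁ : k ≤ 2 ^ n * x) (h₂ : 2 ^ n * x ≤ k + 1) :
    dyadicTent n k x = 1 + k - 2 ^ n * x := by
  rw [dyadicTent, abs_of_nonneg (by linarith), max_eq_right (by linarith)]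
  ring

theorem dyadicTent_eq_zero (h : 1 ≤ |2 ^ n * x - k|) : dyadicTent n k x = 0 :=
  max_eq_left (by linarith)

theorem exists_hasSum_dyadicTent (hx : 0 ≤ x) :
    ∃ m : ℕ, ∃ t : ℝ, 0 ≤ t ∧ t ≤ 1 ∧ 2 ^ n * x = m + t ∧
      ∀ c : ℕ → ℝ, HasSum (fun k => c k * dyadicTent n k x) ((1 - t) * c m + t * c (m + 1)) := by
  set m := ⌊2 ^ n * x⌋₊
  have hm : (m : ℝ) ≤ 2 ^ n * x := Nat.floor_le (by positivity)
  have hm' : 2 ^ n * x < m + 1 := Nat.lt_floor_add_one _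
  refine ⟨m, 2 ^ n * x - m, by linarith, by linarith, by ring, fun c => ?_⟩
  convert hasSum_sum_of_ne_finset_zero (L := .unconditional ℕ) (s := {m, m + 1}) fun k hk => ?_
    using 1
  · rw [Finset.sum_pair (by omega), dyadicTent_eq_right hm (by linarith),
      dyadicTent_eq_left (by push_cast; linarith) (by push_cast; linarith)]
    push_cast
    ring
  · simp only [Finset.mem_insert, Finset.mem_singleton, not_or] at hk
    rw [dyadicTent_eq_zero, mul_zero]
    rcases Nat.lt_or_gt_of_ne hk.1 with hkm | hkm
    · have : (k : ℝ) + 1 ≤ m := by exact_mod_cast hkm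
      rw [abs_of_nonneg (by linarith)]
      linarith
    · have : (m : ℝ) + 2 ≤ k := by exact_mod_cast (show m + 2 ≤ k by omega)
      rw [abs_of_nonpos (by linarith)]
      linarith

theorem tsum_ofReal_dyadicTent (hx : 0 ≤ x) : ∑' k, ENNReal.ofReal (dyadicTent n k x) = 1 := by
  obtain ⟨m, t, -, -, -, hsum⟩ := exists_hasSum_dyadicTent (n := n) hx
  have hone : HasSum (fun k => dyadicTent n k x) 1 := by simpa using hsum fun _ => 1
  rw [← ENNReal.ofReal_tsum_of_nonneg (fun _ => dyadicTent_nonneg) hone.summable, hone.tsum_eq,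
    ENNReal.ofReal_one]

theorem exists_gridInterp_eq (hx : 0 ≤ x) :
    ∃ m : ℕ, ∃ t : ℝ, 0 ≤ t ∧ t ≤ 1 ∧ 2 ^ n * x = m + t ∧
      ∀ g : ℝ → ℝ, gridInterp g n x = (1 - t) * g (m / 2 ^ n) + t * g ((m + 1) / 2 ^ n) := by
  obtain ⟨m, t, ht₀, ht₁, hxm, hsum⟩ := exists_hasSum_dyadicTent (n := n) hx
  refine ⟨m, t, ht₀, ht₁, hxm, fun g => ?_⟩
  rw [gridInterp]
  simpa using (hsum fun k : ℕ => g (k / 2 ^ n)).tsum_eq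

end Tent

section GridMeasure

variable {n : ℕ} {μ : Measure ℝ}

theorem integral_add_integral_eq_integral_dyadicTent [IsFiniteMeasure μ] (k : ℕ) :
    (∫ x in Ico (((k : ℝ) - 1) / 2 ^ n) (k / 2 ^ n), (2 ^ n * x + 1 - k) ∂μ) +
      ∫ x in Ico ((k : ℝ) / 2 ^ n) ((k + 1) / 2 ^ n), (1 + k - 2 ^ n * x) ∂μ =
      ∫ x, dyadicTent n k x ∂μ := by
  have h2 : (0 : ℝ) < 2 ^ n := by positivity
  have hleft : ∫ x in Ico (((k : ℝ) - 1) / 2 ^ n) (k / 2 ^ n), (2 ^ n * x + 1 - k) ∂μ =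
      ∫ x in Ico (((k : ℝ) - 1) / 2 ^ n) (k / 2 ^ n), dyadicTent n k x ∂μ := by
    refine setIntegral_congr_fun measurableSet_Ico fun x ⟨hx₁, hx₂⟩ => ?_
    rw [div_le_iff₀' h2] at hx₁
    rw [lt_div_iff₀' h2] at hx₂
    exact (dyadicTent_eq_left hx₁ hx₂.le).symm
  have hright : ∫ x in Ico ((k : ℝ) / 2 ^ n) ((k + 1) / 2 ^ n), (1 + k - 2 ^ n * x) ∂μ =
      ∫ x in Ico ((k : ℝ) / 2 ^ n) ((k + 1) / 2 ^ n), dyadicTent n k x ∂μ := by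
    refine setIntegral_congr_fun measurableSet_Ico fun x ⟨hx₁, hx₂⟩ => ?_
    rw [div_le_iff₀' h2] at hx₁
    rw [lt_div_iff₀' h2] at hx₂
    exact (dyadicTent_eq_right hx₁ hx₂.le).symm
  rw [hleft, hright, ← setIntegral_union Ico_disjoint_Ico_same measurableSet_Ico
    (integrable_dyadicTent μ).integrableOn (integrable_dyadicTent μ).integrableOn,
    Ico_union_Ico_eq_Ico (by gcongr; linarith) (by gcongr; linarith)]
  refine setIntegral_eq_integral_of_forall_compl_eq_zero fun x hx => dyadicTent_eq_zero ?_
  rw [mem_Ico, not_and_or, not_le, not_lt, lt_div_iff₀' h2, div_le_iff₀' h2] at hx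
  rcases hx with hx | hx
  · rw [abs_of_neg (by linarith)]; linarith
  · rw [abs_of_nonneg (by linarith)]; linarith

theorem gridMeasure_eq_sum [IsFiniteMeasure μ] :
    gridMeasure n μ = Measure.sum fun k : ℕ =>
      ENNReal.ofReal (∫ x, dyadicTent n k x ∂μ) • Measure.dirac ((k : ℝ) / 2 ^ n) := by
  simp_rw [gridMeasure, integral_add_integral_eq_integral_dyadicTent]

theorem gridMeasure_compl_grid :
    gridMeasure n μ {x : ℝ | ¬∃ k : ℕ, x = (k : ℝ) / 2 ^ n} = 0 := by
  rw [gridMeasure, Measure.sum_apply_of_countable, ENNReal.tsum_eq_zero]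
  intro k
  rw [Measure.smul_apply, Measure.dirac_apply, indicator_of_notMem (by simp), smul_zero]

theorem lintegral_gridMeasure [IsFiniteMeasure μ] (f : ℝ → ℝ≥0∞) :
    ∫⁻ x, f x ∂gridMeasure n μ =
      ∑' k : ℕ, ∫⁻ x, f (k / 2 ^ n) * ENNReal.ofReal (dyadicTent n k x) ∂μ := by
  rw [gridMeasure_eq_sum, lintegral_sum_measure]
  refine tsum_congr fun k => ?_
  rw [lintegral_smul_measure, lintegral_dirac, ofReal_integral_eq_lintegral_ofReal
    (integrable_dyadicTent μ) (ae_of_all _ fun _ => dyadicTent_nonneg),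
    lintegral_const_mul _ (by fun_prop), smul_eq_mul, mul_comm]

theorem gridMeasure_univ [IsFiniteMeasure μ] (hμ : ∀ᵐ x ∂μ, 0 ≤ x) :
    gridMeasure n μ univ = μ univ := calc
  gridMeasure n μ univ = ∑' k : ℕ, ∫⁻ x, ENNReal.ofReal (dyadicTent n k x) ∂μ := by
    rw [← lintegral_one, lintegral_gridMeasure]
    simp only [one_mul]
  _ = ∫⁻ x, ∑' k : ℕ, ENNReal.ofReal (dyadicTent n k x) ∂μ :=
    (lintegral_tsum fun _ => by fun_prop).symm
  _ = ∫⁻ _, 1 ∂μ := lintegral_congr_ae (hμ.mono fun _ => tsum_ofReal_dyadicTent)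
  _ = μ univ := lintegral_one

theorem isFiniteMeasure_gridMeasure [IsFiniteMeasure μ] (hμ : ∀ᵐ x ∂μ, 0 ≤ x) :
    IsFiniteMeasure (gridMeasure n μ) :=
  ⟨by rw [gridMeasure_univ hμ]; exact measure_lt_top μ univ⟩

theorem isProbabilityMeasure_gridMeasure [IsProbabilityMeasure μ] (hμ : ∀ᵐ x ∂μ, 0 ≤ x) :
    IsProbabilityMeasure (gridMeasure n μ) :=
  ⟨by rw [gridMeasure_univ hμ, measure_univ]⟩

end GridMeasure

section Interpolation

variable {n : ℕ} {x : ℝ} {μ : Measure ℝ} [IsFiniteMeasure μ] {g : ℝ → ℝ}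

theorem measurable_gridInterp : Measurable (gridInterp g n) :=
  Measurable.tsum fun _ => by fun_prop

theorem tsum_lintegral_enorm_mul_dyadicTent (g : ℝ → ℝ) :
    ∑' k : ℕ, ∫⁻ x, ‖g (k / 2 ^ n) * dyadicTent n k x‖ₑ ∂μ = ∫⁻ x, ‖g x‖ₑ ∂gridMeasure n μ := by
  simp_rw [lintegral_gridMeasure, enorm_mul, Real.enorm_of_nonneg dyadicTent_nonneg]

theorem integrable_gridInterp (hg : Integrable g (gridMeasure n μ)) :
    Integrable (gridInterp g n) μ := by
  refine ⟨measurable_gridInterp.aestronglyMeasurable, ?_⟩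
  calc ∫⁻ x, ‖gridInterp g n x‖ₑ ∂μ
      ≤ ∫⁻ x, ∑' k : ℕ, ‖g (k / 2 ^ n) * dyadicTent n k x‖ₑ ∂μ :=
        lintegral_mono fun _ => enorm_tsum_le_tsum_enorm
    _ = ∫⁻ x, ‖g x‖ₑ ∂gridMeasure n μ := by
      rw [lintegral_tsum fun _ => by fun_prop, tsum_lintegral_enorm_mul_dyadicTent]
    _ < ∞ := hg.2

theorem integral_gridMeasure (hg : Integrable g (gridMeasure n μ)) :
    ∫ x, g x ∂gridMeasure n μ = ∫ x, gridInterp g n x ∂μ := by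
  have hsum := (tsum_lintegral_enorm_mul_dyadicTent (μ := μ) g).trans_ne hg.2.ne
  rw [gridMeasure_eq_sum] at hg ⊢
  unfold gridInterp
  rw [integral_tsum (fun _ => by fun_prop) hsum, integral_sum_measure hg]
  refine tsum_congr fun k => ?_
  rw [integral_smul_measure, integral_dirac, integral_const_mul,
    ENNReal.toReal_ofReal (integral_nonneg fun _ => dyadicTent_nonneg), smul_eq_mul, mul_comm]

theorem convexOn_gridInterp (hg : ConvexOn ℝ (Ici 0) g) : ConvexOn ℝ (Ici 0) (gridInterp g n) := by
  have h2 : (0 : ℝ) < 2 ^ n := by positivity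
  refine convexOn_of_exists_supporting_line (convex_Ici 0) fun z hz => ?_
  obtain ⟨m, t, -, -, hzm, hz⟩ := exists_gridInterp_eq (n := n) hz
  set S := slope g (m / 2 ^ n) ((m + 1) / 2 ^ n)
  have hS : S = (g ((m + 1) / 2 ^ n) - g (m / 2 ^ n)) * 2 ^ n := by
    simp only [S, slope_def_field]; field_simp; ring
  have hgrid (j : ℕ) : S * (j / 2 ^ n) + (g (m / 2 ^ n) - S * (m / 2 ^ n)) ≤ g (j / 2 ^ n) := by
    have := hg.secant_le_of_notMem_Ioo (p := m / 2 ^ n) (q := (m + 1) / 2 ^ n) (r := j / 2 ^ n)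
      (mem_Ici.2 (by positivity)) (mem_Ici.2 (by positivity)) (mem_Ici.2 (by positivity))
      (by gcongr; linarith) fun ⟨hmj, hjm⟩ => by
        rw [div_lt_div_iff_of_pos_right h2] at hmj hjm
        norm_cast at hmj hjm
        omega
    linarith
  refine ⟨S, g (m / 2 ^ n) - S * (m / 2 ^ n), ?_, fun x hx => ?_⟩
  · rw [hz, hS]
    have : z = (m + t) / 2 ^ n := by field_simp; linarith
    subst this
    field_simp
    ring
  · obtain ⟨l, u, hu₀, hu₁, hxl, hx⟩ := exists_gridInterp_eq (n := n) hx
    have hl := hgrid l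
    have hl' := hgrid (l + 1)
    push_cast at hl'
    have : x = (1 - u) * (l / 2 ^ n) + u * ((l + 1) / 2 ^ n) := by field_simp; linarith
    rw [hx, this]
    nlinarith [mul_le_mul_of_nonneg_left hl (sub_nonneg.2 hu₁), mul_le_mul_of_nonneg_left hl' hu₀]

theorem abs_gridInterp_le {B : ℝ} (hB : ∀ y, |g y| ≤ B) (hx : 0 ≤ x) : |gridInterp g n x| ≤ B := by
  obtain ⟨m, t, ht₀, ht₁, -, hx⟩ := exists_gridInterp_eq (n := n) hx
  rw [hx, abs_le]
  have h₁ := abs_le.1 (hB (m / 2 ^ n))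
  have h₂ := abs_le.1 (hB ((m + 1) / 2 ^ n))
  constructor <;> nlinarith

theorem tendsto_gridInterp (hg : Continuous g) (hx : 0 ≤ x) :
    Tendsto (fun n => gridInterp g n x) atTop (𝓝 (g x)) := by
  choose m t ht₀ ht₁ hxm hinterp using fun n : ℕ => exists_gridInterp_eq (n := n) hx
  have hpow : Tendsto (fun n : ℕ => ((1 : ℝ) / 2) ^ n) atTop (𝓝 0) :=
    tendsto_pow_atTop_nhds_zero_of_lt_one (by norm_num) (by norm_num)
  have hgrid (a : ℝ) (ha₀ : 0 ≤ a) (ha₁ : a ≤ 1) :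
      Tendsto (fun n => g ((m n + a) / 2 ^ n)) atTop (𝓝 (g x)) := by
    refine (hg.tendsto x).comp (tendsto_iff_norm_sub_tendsto_zero.2 ?_)
    refine squeeze_zero (fun _ => norm_nonneg _) (fun n => ?_) hpow
    have h2 : (0 : ℝ) < 2 ^ n := by positivity
    have : (m n + a) / 2 ^ n - x = (a - t n) / 2 ^ n := by field_simp; linarith [hxm n]
    rw [this, norm_div, Real.norm_of_nonneg h2.le, div_pow, one_pow,
      div_le_div_iff_of_pos_right h2, Real.norm_eq_abs, abs_le]
    constructor <;> linarith [ht₀ n, ht₁ n]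
  have hp := hgrid 0 le_rfl zero_le_one
  have hq := hgrid 1 zero_le_one le_rfl
  simp only [add_zero] at hp
  rw [tendsto_iff_norm_sub_tendsto_zero] at hp hq ⊢
  refine squeeze_zero (fun _ => norm_nonneg _) (fun n => ?_) (by simpa using hp.add hq)
  simp only [Real.norm_eq_abs]
  rw [hinterp n g, abs_le]
  have hp₁ := neg_abs_le (g (m n / 2 ^ n) - g x)
  have hp₂ := le_abs_self (g (m n / 2 ^ n) - g x)
  have hq₁ := neg_abs_le (g ((m n + 1) / 2 ^ n) - g x)
  have hq₂ := le_abs_self (g ((m n + 1) / 2 ^ n) - g x)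
  constructor <;> nlinarith [ht₀ n, ht₁ n]

theorem tendsto_integral_gridMeasure (hμ : ∀ᵐ x ∂μ, 0 ≤ x)
    (hg : Continuous g) {B : ℝ} (hB : ∀ x, |g x| ≤ B) :
    Tendsto (fun n => ∫ x, g x ∂gridMeasure n μ) atTop (𝓝 (∫ x, g x ∂μ)) := by
  have hint (n : ℕ) : Integrable g (gridMeasure n μ) :=
    have := isFiniteMeasure_gridMeasure (n := n) hμ
    .of_bound hg.aestronglyMeasurable B (ae_of_all _ hB)
  simp_rw [integral_gridMeasure (hint _)]
  exact tendsto_integral_of_dominated_convergence (fun _ => B)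
    (fun _ => measurable_gridInterp.aestronglyMeasurable) (integrable_const B)
    (fun _ => hμ.mono fun _ => abs_gridInterp_le hB) (hμ.mono fun _ => tendsto_gridInterp hg)

end Interpolation

/-- If `μ 0, …, μ T` are probability measures on `ℝ₊` in convex (increasing) order
(i.e. marginals of a martingale), then the grid discretizations `gridMeasure n (μ i)`:
(1) are probability measures; (2) are supported on the grid `Kⁿ`;
(3) converge weakly to `μ i` as `n → ∞`; and
(4) are again in convex order, hence are the marginals of a martingale on `(Kⁿ)^{T+1}`. -/
theorem stmt3 (T : ℕ) (μ : ℕ → Measure ℝ)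
    (hprob : ∀ i ≤ T, IsProbabilityMeasure (μ i))
    (hsupp : ∀ i ≤ T, μ i (Set.Iio 0) = 0)
    (hconvord : ∀ h : ℝ → ℝ, ConvexOn ℝ (Set.Ici 0) h →
      (∀ i ≤ T, Integrable h (μ i)) →
      ∀ i j, i ≤ j → j ≤ T → ∫ x, h x ∂μ i ≤ ∫ x, h x ∂μ j) :
    (∀ n : ℕ, ∀ i ≤ T, IsProbabilityMeasure (gridMeasure n (μ i))) ∧
    (∀ n : ℕ, ∀ i ≤ T,
      gridMeasure n (μ i) {x : ℝ | ¬∃ k : ℕ, x = (k : ℝ) / 2 ^ n} = 0) ∧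
    (∀ i ≤ T, ∀ f : ℝ → ℝ, Continuous f → (∃ B : ℝ, ∀ x, |f x| ≤ B) →
      Filter.Tendsto (fun n => ∫ x, f x ∂(gridMeasure n (μ i))) Filter.atTop
        (nhds (∫ x, f x ∂(μ i)))) ∧
    (∀ n : ℕ, ∀ h : ℝ → ℝ, ConvexOn ℝ (Set.Ici 0) h →
      (∀ i ≤ T, Integrable h (gridMeasure n (μ i))) →
      ∀ i j, i ≤ j → j ≤ T →
        ∫ x, h x ∂(gridMeasure n (μ i)) ≤ ∫ x, h x ∂(gridMeasure n (μ j))) := by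
  have hnonneg (i : ℕ) (hi : i ≤ T) : ∀ᵐ x ∂μ i, 0 ≤ x :=
    ae_iff.2 (by simp only [not_le]; exact hsupp i hi)
  refine ⟨fun n i hi => have := hprob i hi; isProbabilityMeasure_gridMeasure (hnonneg i hi),
    fun _ _ _ => gridMeasure_compl_grid,
    fun i hi f hf ⟨B, hB⟩ => have := hprob i hi; tendsto_integral_gridMeasure (hnonneg i hi) hf hB,
    fun n h hh hint i j hij hjT => ?_⟩
  have := hprob i (hij.trans hjT)
  have := hprob j hjT
  rw [integral_gridMeasure (hint i (hij.trans hjT)), integral_gridMeasure (hint j hjT)]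
  exact hconvord _ (convexOn_gridInterp hh)
    (fun l hl => have := hprob l hl; integrable_gridInterp (hint l hl)) i j hij hjT
end

section
/- With notation as in the previous statement: for any function $h: \mathbb{R}_+ \to \mathbb{R}$, letting $h^n$ be the piecewise linear function with $h^n(k/2^n) = h(k/2^n)$ for $k \in \mathbb{N} \cup \{0\}$ and linear interpolation in between, one has $\int_{\mathbb{R}_+} h\, d\mu_i^n = \int_{\mathbb{R}_+} h^n\, d\mu_i$ (whenever both sides are defined). -/
/-! The grid measure puts at `k / 2ⁿ` the `μ`-mass of the hat function centred there, made of its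
rising half on the cell left of `k / 2ⁿ` and its falling half on the cell right of it. On the cell
`[k / 2ⁿ, (k + 1) / 2ⁿ)` the interpolant `hⁿ` is `h (k / 2ⁿ)` times the falling half of the hat at
`k / 2ⁿ` plus `h ((k + 1) / 2ⁿ)` times the rising half of the hat at `(k + 1) / 2ⁿ`. As `μ` is carried
by `[0, ∞)`, the union of the cells, `∫ hⁿ dμ` is the sum of the cell integrals; regrouping this series
by grid point (the rising half at `0` has no mass) gives `∑ₖ (mass of the k-th hat) · h (k / 2ⁿ)`,
which is `∫ h d(gridMeasure n μ)`. -/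

open MeasureTheory

/-- The piecewise-linear interpolant of `h` at the dyadic grid points of mesh `2⁻ⁿ`. -/
noncomputable def interp (n : ℕ) (h : ℝ → ℝ) (x : ℝ) : ℝ :=
  (1 + (⌊(2 : ℝ) ^ n * x⌋ : ℝ) - 2 ^ n * x) * h ((⌊(2 : ℝ) ^ n * x⌋ : ℝ) / 2 ^ n) +
  (2 ^ n * x - (⌊(2 : ℝ) ^ n * x⌋ : ℝ)) * h ((1 + (⌊(2 : ℝ) ^ n * x⌋ : ℝ)) / 2 ^ n)

theorem tsum_add_eq_tsum_add_succ {G : Type*} [AddCommGroup G] [TopologicalSpace G]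
    [IsTopologicalAddGroup G] [T2Space G] {u v : ℕ → G} (hu : Summable u) (hv : Summable v)
    (hv0 : v 0 = 0) :
    ∑' k, (v k + u k) = ∑' k, (u k + v (k + 1)) := by
  rw [hu.tsum_add ((summable_nat_add_iff 1).mpr hv), hv.tsum_add hu, hv.tsum_eq_zero_add, hv0,
    zero_add, add_comm]

theorem hasSum_integral_sum_smul_dirac {α : Type*} [MeasurableSpace α]
    [MeasurableSingletonClass α] {c : ℕ → ℝ} (hc : ∀ k, 0 ≤ c k) (x : ℕ → α) {f : α → ℝ}
    (hf : Integrable f (Measure.sum fun k => ENNReal.ofReal (c k) • Measure.dirac (x k))) :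
    HasSum (fun k => c k * f (x k))
      (∫ y, f y ∂(Measure.sum fun k => ENNReal.ofReal (c k) • Measure.dirac (x k))) := by
  have hterm (k : ℕ) : ∫ y, f y ∂(ENNReal.ofReal (c k) • Measure.dirac (x k)) = c k * f (x k) := by
    rw [integral_smul_measure, integral_dirac, ENNReal.toReal_ofReal (hc k), smul_eq_mul]
  simpa only [hterm] using hasSum_integral_measure hf

section DyadicCells

variable {n k : ℕ} {x : ℝ}

def dyadicIco (n k : ℕ) : Set ℝ := Set.Ico ((k : ℝ) / 2 ^ n) (((k : ℝ) + 1) / 2 ^ n)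

theorem mem_dyadicIco_iff : x ∈ dyadicIco n k ↔ (k : ℝ) ≤ 2 ^ n * x ∧ 2 ^ n * x < k + 1 := by
  have hpow : (0 : ℝ) < 2 ^ n := by positivity
  rw [dyadicIco, Set.mem_Ico, div_le_iff₀' hpow, lt_div_iff₀' hpow]

theorem floor_eq_of_mem_dyadicIco (hx : x ∈ dyadicIco n k) : ⌊(2 : ℝ) ^ n * x⌋ = k := by
  rw [Int.floor_eq_iff]
  exact_mod_cast mem_dyadicIco_iff.mp hx

theorem measurableSet_dyadicIco : MeasurableSet (dyadicIco n k) := measurableSet_Ico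

theorem pairwise_disjoint_dyadicIco (n : ℕ) : Pairwise (Function.onFun Disjoint (dyadicIco n)) := by
  intro i j hij
  refine Set.disjoint_left.mpr fun x hi hj => hij ?_
  exact_mod_cast (floor_eq_of_mem_dyadicIco hi).symm.trans (floor_eq_of_mem_dyadicIco hj)

theorem iUnion_dyadicIco (n : ℕ) : ⋃ k, dyadicIco n k = Set.Ici 0 := by
  ext x
  simp only [Set.mem_iUnion, Set.mem_Ici]
  constructor
  · rintro ⟨k, hk⟩
    exact le_trans (by positivity) hk.1
  · intro hx
    have h2x : 0 ≤ (2 : ℝ) ^ n * x := by positivity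
    exact ⟨⌊(2 : ℝ) ^ n * x⌋₊, mem_dyadicIco_iff.mpr ⟨Nat.floor_le h2x, Nat.lt_floor_add_one _⟩⟩

theorem integral_eq_tsum_setIntegral_dyadicIco {μ : Measure ℝ} (hμ : μ (Set.Iio 0) = 0)
    {E : Type*} [NormedAddCommGroup E] [NormedSpace ℝ E] {f : ℝ → E} (hf : Integrable f μ) :
    ∫ x, f x ∂μ = ∑' k, ∫ x in dyadicIco n k, f x ∂μ := by
  have hμ' : μ.restrict (Set.Ici 0) = μ :=
    Measure.restrict_eq_self_of_ae_mem (by rwa [ae_iff, ← Set.compl_def, Set.compl_Ici])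
  calc ∫ x, f x ∂μ = ∫ x in ⋃ k, dyadicIco n k, f x ∂μ := by rw [iUnion_dyadicIco, hμ']
    _ = ∑' k, ∫ x in dyadicIco n k, f x ∂μ :=
      integral_iUnion (fun _ => measurableSet_dyadicIco) (pairwise_disjoint_dyadicIco n)
        hf.integrableOn

theorem interp_eq_of_mem_dyadicIco (h : ℝ → ℝ) (hx : x ∈ dyadicIco n k) :
    interp n h x = (1 + k - 2 ^ n * x) * h (k / 2 ^ n) + (2 ^ n * x - k) * h ((k + 1) / 2 ^ n) := by
  rw [interp, floor_eq_of_mem_dyadicIco hx, Int.cast_natCast, add_comm 1 (k : ℝ)]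

end DyadicCells

section HatMasses

variable (n : ℕ) (μ : Measure ℝ) (k : ℕ)

noncomputable def hatLeftMass : ℝ :=
  ∫ x in Set.Ico (((k : ℝ) - 1) / 2 ^ n) ((k : ℝ) / 2 ^ n), (2 ^ n * x + 1 - (k : ℝ)) ∂μ

noncomputable def hatRightMass : ℝ :=
  ∫ x in dyadicIco n k, (1 + (k : ℝ) - 2 ^ n * x) ∂μ

theorem hatLeftMass_nonneg : 0 ≤ hatLeftMass n μ k :=
  setIntegral_nonneg measurableSet_Ico fun x hx => by
    have := (div_le_iff₀' (by positivity : (0 : ℝ) < 2 ^ n)).mp hx.1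
    linarith

theorem hatRightMass_nonneg : 0 ≤ hatRightMass n μ k :=
  setIntegral_nonneg measurableSet_dyadicIco fun x hx => by
    have := (mem_dyadicIco_iff.mp hx).2
    linarith

theorem gridMeasure_eq_sum_smul_dirac : gridMeasure n μ = Measure.sum fun k =>
    ENNReal.ofReal (hatLeftMass n μ k + hatRightMass n μ k) • Measure.dirac ((k : ℝ) / 2 ^ n) :=
  rfl

variable {μ}

theorem hatLeftMass_zero (hμ : μ (Set.Iio 0) = 0) : hatLeftMass n μ 0 = 0 := by
  have hnull : μ (Set.Ico ((((0 : ℕ) : ℝ) - 1) / 2 ^ n) (((0 : ℕ) : ℝ) / 2 ^ n)) = 0 :=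
    measure_mono_null (fun x hx => by simpa using hx.2) hμ
  rw [hatLeftMass, Measure.restrict_eq_zero.mpr hnull, integral_zero_measure]

theorem hatLeftMass_succ :
    hatLeftMass n μ (k + 1) = ∫ x in dyadicIco n k, (2 ^ n * x - k) ∂μ := by
  rw [hatLeftMass, dyadicIco]
  push_cast
  rw [add_sub_cancel_right]
  congr 1
  ext x
  ring

theorem setIntegral_interp_dyadicIco [IsLocallyFiniteMeasure μ] (h : ℝ → ℝ) :
    ∫ x in dyadicIco n k, interp n h x ∂μ =
      hatRightMass n μ k * h (k / 2 ^ n) + hatLeftMass n μ (k + 1) * h ((k + 1 : ℕ) / 2 ^ n) := by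
  have hint : ∀ a b : ℝ, IntegrableOn (fun x => a * x + b) (dyadicIco n k) μ := fun a b =>
    ((by fun_prop : Continuous fun x : ℝ => a * x + b).integrableOn_Icc).mono_set
      Set.Ico_subset_Icc_self
  rw [setIntegral_congr_fun measurableSet_dyadicIco fun x hx => interp_eq_of_mem_dyadicIco h hx,
    integral_add, integral_mul_const, integral_mul_const, hatRightMass, hatLeftMass_succ,
    Nat.cast_succ]
  · convert (hint (-2 ^ n) (1 + k)).mul_const (h (k / 2 ^ n)) using 2; ring
  · convert (hint (2 ^ n) (-k)).mul_const (h ((k + 1) / 2 ^ n)) using 2; ring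

end HatMasses

/-- The interpolation identity: integrating `h` against the grid discretization `μⁿ`
equals integrating the piecewise-linear interpolant `hⁿ` against `μ`. -/
theorem stmt4 (n : ℕ) (μ : Measure ℝ) (hprob : IsProbabilityMeasure μ)
    (hsupp : μ (Set.Iio 0) = 0) (h : ℝ → ℝ)
    (hint1 : Integrable h (gridMeasure n μ))
    (hint2 : Integrable (interp n h) μ) :
    ∫ x, h x ∂(gridMeasure n μ) = ∫ x, interp n h x ∂μ := by
  set a := hatRightMass n μ
  set b := hatLeftMass n μ
  set g : ℕ → ℝ := fun k => h (k / 2 ^ n)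
  have hw : ∀ k, 0 ≤ b k + a k := fun k =>
    add_nonneg (hatLeftMass_nonneg n μ k) (hatRightMass_nonneg n μ k)
  rw [gridMeasure_eq_sum_smul_dirac] at hint1 ⊢
  have habs := (hasSum_integral_sum_smul_dirac hw _ hint1.norm).summable
  have hsummable : ∀ c : ℕ → ℝ, (∀ k, 0 ≤ c k) → (∀ k, c k ≤ b k + a k) →
      Summable fun k => c k * g k := fun c hc hcw =>
    habs.of_norm_bounded fun k => by
      rw [norm_mul, Real.norm_of_nonneg (hc k)]
      exact mul_le_mul_of_nonneg_right (hcw k) (norm_nonneg _)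
  have ha := hsummable a (hatRightMass_nonneg n μ) fun k =>
    le_add_of_nonneg_left (hatLeftMass_nonneg n μ k)
  have hb := hsummable b (hatLeftMass_nonneg n μ) fun k =>
    le_add_of_nonneg_right (hatRightMass_nonneg n μ k)
  rw [← (hasSum_integral_sum_smul_dirac hw _ hint1).tsum_eq,
    integral_eq_tsum_setIntegral_dyadicIco hsupp hint2]
  simp_rw [add_mul]
  rw [tsum_add_eq_tsum_add_succ ha hb (by simp [b, hatLeftMass_zero n hsupp])]
  exact tsum_congr fun k => (setIntegral_interp_dyadicIco n k h).symm
end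

section
/- Let $(\Omega, \mathcal{F}, (\mathcal{F}_t)_{t=0}^T)$ be a finite filtered space and let $f = (f_t)_{t=0}^T$ be an adapted real-valued process. Let $\mathcal{R}$ be a set of probability measures on $\Omega$ that is stable under pasting (closed under the recursive one-step structure: $\mathcal{R}$ is formed from one-step kernel families $\mathcal{R}_t(\omega)$). Define the upper value $X_t = \inf_{\tau \in \mathcal{T}_t} \mathcal{E}_t[f_\tau]$ where $\mathcal{E}_t[\xi](\omega) = \sup_{P \in \mathfrak{R}_t(\omega)} E_P[\xi]$. Then $X$ satisfies the backward dynamic programming recursion $X_T = f_T$ and $X_t = f_t \wedge \mathcal{E}_t(X_{t+1})$ for $t = T-1, \ldots, 0$. -/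
/-! Adverse optimal stopping for nonlinear expectations on the product path space
`Ω = Ω₁^ℕ` (coordinates `0, …, T-1` are observed at times `1, …, T`), with `Ω₁` finite.
`R t ω` is the set of one-step transition laws available at time `t` in state `ω`;
the pasting-stable family `𝔯_t(ω)` is encoded by the recursively defined nonlinear
conditional expectation `NE`. -/

/-- The nonlinear conditional expectation `𝓔_t[ξ](ω) = sup_{P ∈ 𝔯_t(ω)} E_P[ξ(ω^t, ·)]`
obtained by backward recursion over the one-step kernel sets `R`. -/
noncomputable def NE {Ω₁ : Type*} [Fintype Ω₁] (T : ℕ)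
    (R : ℕ → (ℕ → Ω₁) → Set (Ω₁ → ℝ)) (t : ℕ) (ξ : (ℕ → Ω₁) → ℝ) : (ℕ → Ω₁) → ℝ :=
  if h : T ≤ t then ξ
  else fun ω =>
    sSup ((fun P : Ω₁ → ℝ =>
      ∑ x : Ω₁, P x * NE T R (t + 1) ξ (Function.update ω t x)) '' R t ω)
termination_by T - t
decreasing_by omega

/-- Stopping times of the raw filtration with values in `[t, T]`. -/
def IsStopAt {Ω₁ : Type*} (T t : ℕ) (τ : (ℕ → Ω₁) → ℕ) : Prop :=
  (∀ ω, t ≤ τ ω ∧ τ ω ≤ T) ∧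
  ∀ s : ℕ, ∀ ω ω' : ℕ → Ω₁, (∀ j, j < s → ω j = ω' j) → τ ω = s → τ ω' = s

/-- An adapted payoff process: `f t` depends only on the first `t` coordinates. -/
def AdaptedProc {Ω₁ : Type*} (T : ℕ) (f : ℕ → (ℕ → Ω₁) → ℝ) : Prop :=
  ∀ t ≤ T, ∀ ω ω' : ℕ → Ω₁, (∀ j, j < t → ω j = ω' j) → f t ω = f t ω'

/-- The one-step kernel sets are nonempty convex-free families of probability vectors,
depending only on the past. -/
def GoodKernels {Ω₁ : Type*} [Fintype Ω₁] (T : ℕ)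
    (R : ℕ → (ℕ → Ω₁) → Set (Ω₁ → ℝ)) : Prop :=
  ∀ t, t < T → ∀ ω : ℕ → Ω₁,
    (R t ω).Nonempty ∧
    (∀ P ∈ R t ω, (∀ x, 0 ≤ P x) ∧ ∑ x : Ω₁, P x = 1) ∧
    (∀ ω' : ℕ → Ω₁, (∀ j, j < t → ω j = ω' j) → R t ω = R t ω')

/-- The upper value process `X t = inf_{τ ∈ 𝒯_t} 𝓔_t[f_τ]`. -/
noncomputable def upValue {Ω₁ : Type*} [Fintype Ω₁] (T : ℕ)
    (R : ℕ → (ℕ → Ω₁) → Set (Ω₁ → ℝ)) (f : ℕ → (ℕ → Ω₁) → ℝ) (t : ℕ) :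
    (ℕ → Ω₁) → ℝ :=
  fun ω => ⨅ τ : {τ : (ℕ → Ω₁) → ℕ // IsStopAt T t τ},
    NE T R t (fun ω' => f (τ.1 ω') ω') ω

/-!
Two features of the recursive expectation `NE` drive the argument: it is monotone and
fixes constants, and `NE t ξ ω` depends only on `ω` before time `t` and on the values of `ξ`
on the cylinder of `ω`. In particular the value process is adapted, so `𝓔_t X_{t+1}` is the
one-step worst-case expectation of `x ↦ X_{t+1}(ω[t ↦ x])`.
For `X_t ≤ 𝓔_t X_{t+1}`, paste together, over the coordinate `x` revealed after time `t`,
`ε`-optimal stopping times of the problems started at `ω[t ↦ x]`. Conversely, a stopping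
time in `𝒯_t` either stops at `t` on the whole cylinder of `ω`, with value `f t ω`, or
nowhere on it, and then it agrees there with a stopping time in `𝒯_{t+1}`, whose value
dominates `X_{t+1}`.
-/

open Function

section UpperExp

variable {Ω₁ : Type*} [Fintype Ω₁]

noncomputable def upperExp (S : Set (Ω₁ → ℝ)) (g : Ω₁ → ℝ) : ℝ :=
  sSup ((fun P : Ω₁ → ℝ => ∑ x, P x * g x) '' S)

variable {S : Set (Ω₁ → ℝ)} {g g' : Ω₁ → ℝ}

lemma sum_mul_le_upperExp (hS : ∀ P ∈ S, (∀ x, 0 ≤ P x) ∧ ∑ x, P x = 1)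
    {P : Ω₁ → ℝ} (hP : P ∈ S) : ∑ x, P x * g x ≤ upperExp S g := by
  obtain ⟨M, hM⟩ := (Set.finite_range g).bddAbove
  refine le_csSup ⟨M, ?_⟩ (Set.mem_image_of_mem _ hP)
  rintro _ ⟨Q, hQ, rfl⟩
  calc ∑ x, Q x * g x ≤ ∑ x, Q x * M :=
        Finset.sum_le_sum fun x _ => mul_le_mul_of_nonneg_left (hM ⟨x, rfl⟩) ((hS Q hQ).1 x)
    _ = M := by rw [← Finset.sum_mul, (hS Q hQ).2, one_mul]

lemma upperExp_le (hne : S.Nonempty) {c : ℝ} (h : ∀ P ∈ S, ∑ x, P x * g x ≤ c) :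
    upperExp S g ≤ c :=
  csSup_le (hne.image _) (Set.forall_mem_image.mpr h)

lemma upperExp_mono (hne : S.Nonempty) (hS : ∀ P ∈ S, (∀ x, 0 ≤ P x) ∧ ∑ x, P x = 1)
    (h : ∀ x, g x ≤ g' x) : upperExp S g ≤ upperExp S g' :=
  upperExp_le hne fun P hP => (Finset.sum_le_sum fun x _ =>
    mul_le_mul_of_nonneg_left (h x) ((hS P hP).1 x)).trans (sum_mul_le_upperExp hS hP)

lemma upperExp_add_const_le (hne : S.Nonempty)
    (hS : ∀ P ∈ S, (∀ x, 0 ≤ P x) ∧ ∑ x, P x = 1) (c : ℝ) :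
    upperExp S (fun x => g x + c) ≤ upperExp S g + c :=
  upperExp_le hne fun P hP => by
    rw [Finset.sum_congr rfl fun x _ => mul_add (P x) (g x) c, Finset.sum_add_distrib,
      ← Finset.sum_mul, (hS P hP).2, one_mul]
    exact add_le_add_left (sum_mul_le_upperExp hS hP) c

lemma upperExp_const (hne : S.Nonempty) (hS : ∀ P ∈ S, (∀ x, 0 ≤ P x) ∧ ∑ x, P x = 1)
    (c : ℝ) : upperExp S (fun _ => c) = c := by
  have hsum : ∀ P ∈ S, ∑ x, P x * c = c := fun P hP => by
    rw [← Finset.sum_mul, (hS P hP).2, one_mul]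
  obtain ⟨P, hP⟩ := hne
  exact le_antisymm (upperExp_le ⟨P, hP⟩ fun Q hQ => (hsum Q hQ).le)
    ((hsum P hP).symm.le.trans (sum_mul_le_upperExp hS hP))

end UpperExp

lemma agree_of_agree_update {Ω₁ : Type*} {t : ℕ} {ω p : ℕ → Ω₁} {x : Ω₁}
    (h : ∀ j < t + 1, p j = update ω t x j) : ∀ j < t, p j = ω j :=
  fun j hj => by rw [h j (by omega), update_of_ne (by omega)]

section NE

variable {Ω₁ : Type*} [Fintype Ω₁] {T : ℕ} {R : ℕ → (ℕ → Ω₁) → Set (Ω₁ → ℝ)}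

lemma NE_of_le {t : ℕ} {ξ : (ℕ → Ω₁) → ℝ} (h : T ≤ t) : NE T R t ξ = ξ := by
  rw [NE, dif_pos h]

lemma NE_of_lt {t : ℕ} {ξ : (ℕ → Ω₁) → ℝ} {ω : ℕ → Ω₁} (h : t < T) :
    NE T R t ξ ω = upperExp (R t ω) (fun x => NE T R (t + 1) ξ (update ω t x)) := by
  rw [NE, dif_neg h.not_ge]
  rfl

lemma NE_congr_fun {t : ℕ} {ξ ξ' : (ℕ → Ω₁) → ℝ} {ω : ℕ → Ω₁}
    (h : ∀ p, (∀ j < t, p j = ω j) → ξ p = ξ' p) :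
    NE T R t ξ ω = NE T R t ξ' ω := by
  rcases le_or_gt T t with hT | hT
  · rw [NE_of_le hT, NE_of_le hT]
    exact h ω fun _ _ => rfl
  · rw [NE_of_lt hT, NE_of_lt hT]
    congr 1
    funext x
    exact NE_congr_fun fun p hp => h p (agree_of_agree_update hp)
termination_by T - t

lemma NE_congr_path (hR : GoodKernels T R) {ξ : (ℕ → Ω₁) → ℝ}
    (hξ : ∀ p p', (∀ j < T, p j = p' j) → ξ p = ξ p')
    {t : ℕ} {ω ω' : ℕ → Ω₁} (h : ∀ j < t, ω j = ω' j) : NE T R t ξ ω = NE T R t ξ ω' := by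
  rcases le_or_gt T t with hT | hT
  · rw [NE_of_le hT]
    exact hξ ω ω' fun j hj => h j (by omega)
  · rw [NE_of_lt hT, NE_of_lt hT, (hR t hT ω).2.2 ω' h]
    congr 1
    funext x
    refine NE_congr_path hR hξ fun j hj => ?_
    rcases Nat.lt_succ_iff_lt_or_eq.mp hj with hj | rfl
    · rw [update_of_ne (by omega), update_of_ne (by omega), h j hj]
    · rw [update_self, update_self]
termination_by T - t

lemma NE_mono (hR : GoodKernels T R) {ξ ξ' : (ℕ → Ω₁) → ℝ} (h : ∀ p, ξ p ≤ ξ' p)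
    {t : ℕ} {ω : ℕ → Ω₁} : NE T R t ξ ω ≤ NE T R t ξ' ω := by
  rcases le_or_gt T t with hT | hT
  · rw [NE_of_le hT, NE_of_le hT]
    exact h ω
  · rw [NE_of_lt hT, NE_of_lt hT]
    exact upperExp_mono (hR t hT ω).1 (hR t hT ω).2.1 fun x => NE_mono hR h
termination_by T - t

lemma NE_const (hR : GoodKernels T R) (c : ℝ) {t : ℕ} {ω : ℕ → Ω₁} : NE T R t (fun _ => c) ω = c := by
  rcases le_or_gt T t with hT | hT
  · rw [NE_of_le hT]
  · rw [NE_of_lt hT]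
    rw [show (fun x => NE T R (t + 1) (fun _ => c) (update ω t x)) = fun _ => c from
      funext fun _ => NE_const hR c]
    exact upperExp_const (hR t hT ω).1 (hR t hT ω).2.1 c
termination_by T - t

lemma NE_eq_self (hR : GoodKernels T R) {t : ℕ} {ξ : (ℕ → Ω₁) → ℝ} {ω : ℕ → Ω₁}
    (h : ∀ p, (∀ j < t, p j = ω j) → ξ p = ξ ω) :
    NE T R t ξ ω = ξ ω :=
  (NE_congr_fun (ξ' := fun _ => ξ ω) h).trans (NE_const hR _)

end NE

section Stopping

variable {Ω₁ : Type*} {T t : ℕ} {τ : (ℕ → Ω₁) → ℕ}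

lemma IsStopAt.const {s : ℕ} (hts : t ≤ s) (hsT : s ≤ T) :
    IsStopAt (Ω₁ := Ω₁) T t (fun _ => s) :=
  ⟨fun _ => ⟨hts, hsT⟩, fun _ _ _ _ hs => hs⟩

lemma IsStopAt.eq_horizon (hτ : IsStopAt T T τ) (ω : ℕ → Ω₁) : τ ω = T :=
  le_antisymm (hτ.1 ω).2 (hτ.1 ω).1

lemma IsStopAt.paste {τ : Ω₁ → (ℕ → Ω₁) → ℕ} (hτ : ∀ x, IsStopAt T (t + 1) (τ x)) :
    IsStopAt T t (fun p => τ (p t) p) := by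
  refine ⟨fun p => ⟨(Nat.le_succ t).trans ((hτ (p t)).1 p).1, ((hτ (p t)).1 p).2⟩, ?_⟩
  intro s ω ω' h hs
  have hts : t < s := hs ▸ ((hτ (ω t)).1 ω).1
  simp only at hs ⊢
  rw [← h t hts]
  exact (hτ (ω t)).2 s ω ω' h hs

lemma IsStopAt.max_succ (hτ : IsStopAt T t τ) (ht : t < T) :
    IsStopAt T (t + 1) (fun p => max (t + 1) (τ p)) := by
  refine ⟨fun p => ⟨le_max_left _ _, max_le ht (hτ.1 p).2⟩, ?_⟩
  intro s ω ω' h hs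
  simp only at hs ⊢
  rcases lt_or_ge (τ ω) (t + 1) with hlt | hge
  · have hωt : τ ω = t := le_antisymm (Nat.lt_succ_iff.mp hlt) (hτ.1 ω).1
    have := hτ.2 t ω ω' (fun j hj => h j (by omega)) hωt
    omega
  · have := hτ.2 s ω ω' h (by omega)
    omega

lemma IsStopAt.succ_le_of_ne (hτ : IsStopAt T t τ) {ω p : ℕ → Ω₁} (hω : τ ω ≠ t)
    (hp : ∀ j < t, p j = ω j) : t + 1 ≤ τ p := by
  have := (hτ.1 p).1
  have : τ p ≠ t := fun hpt => hω (hτ.2 t p ω hp hpt)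
  omega

lemma IsStopAt.payoff_congr {f : ℕ → (ℕ → Ω₁) → ℝ} (hτ : IsStopAt T t τ)
    (hf : AdaptedProc T f) {p p' : ℕ → Ω₁} (h : ∀ j < T, p j = p' j) :
    f (τ p) p = f (τ p') p' := by
  have hτT := (hτ.1 p).2
  rw [hτ.2 (τ p) p p' (fun j hj => h j (by omega)) rfl]
  exact hf _ hτT p p' fun j hj => h j (by omega)

end Stopping

lemma AdaptedProc.exists_lower_bound {Ω₁ : Type*} [Finite Ω₁] [Nonempty Ω₁] {T : ℕ}
    {f : ℕ → (ℕ → Ω₁) → ℝ} (hf : AdaptedProc T f) :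
    ∃ m, ∀ s ≤ T, ∀ ω, m ≤ f s ω := by
  let extend (v : Fin T → Ω₁) : ℕ → Ω₁ := fun j =>
    if h : j < T then v ⟨j, h⟩ else Classical.arbitrary Ω₁
  obtain ⟨m, hm⟩ := (Set.finite_range fun p : Fin (T + 1) × (Fin T → Ω₁) =>
    f p.1 (extend p.2)).bddBelow
  refine ⟨m, fun s hs ω => (hm ⟨(⟨s, by omega⟩, fun j => ω j), rfl⟩).trans_eq ?_⟩
  exact hf s hs _ ω fun j hj => by simp only [extend, dif_pos (show j < T by omega)]

section UpValue

variable {Ω₁ : Type*} [Fintype Ω₁] {T t : ℕ} {R : ℕ → (ℕ → Ω₁) → Set (Ω₁ → ℝ)}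
  {f : ℕ → (ℕ → Ω₁) → ℝ} {τ : (ℕ → Ω₁) → ℕ}

lemma upValue_le (hR : GoodKernels T R) (hf : AdaptedProc T f) (hτ : IsStopAt T t τ)
    (ω : ℕ → Ω₁) : upValue T R f t ω ≤ NE T R t (fun p => f (τ p) p) ω := by
  have : Nonempty Ω₁ := ⟨ω 0⟩
  obtain ⟨m, hm⟩ := hf.exists_lower_bound
  refine ciInf_le ⟨m, ?_⟩ (⟨τ, hτ⟩ : {τ // IsStopAt T t τ})
  rintro _ ⟨σ, rfl⟩
  exact (NE_const hR m).symm.le.trans (NE_mono hR fun p => hm _ (σ.2.1 p).2 p)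

lemma exists_isStopAt_lt_upValue_add (ht : t ≤ T) (ω : ℕ → Ω₁) {ε : ℝ} (hε : 0 < ε) :
    ∃ τ, IsStopAt T t τ ∧ NE T R t (fun p => f (τ p) p) ω < upValue T R f t ω + ε := by
  have : Nonempty {τ : (ℕ → Ω₁) → ℕ // IsStopAt T t τ} := ⟨⟨_, IsStopAt.const ht le_rfl⟩⟩
  obtain ⟨⟨τ, hτ⟩, h⟩ := exists_lt_of_ciInf_lt (lt_add_of_pos_right (upValue T R f t ω) hε)
  exact ⟨τ, hτ, h⟩

lemma upValue_horizon (ω : ℕ → Ω₁) : upValue T R f T ω = f T ω := by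
  have : Nonempty {τ : (ℕ → Ω₁) → ℕ // IsStopAt T T τ} := ⟨⟨_, IsStopAt.const le_rfl le_rfl⟩⟩
  refine (iInf_congr fun τ => ?_).trans ciInf_const
  rw [NE_of_le le_rfl, τ.2.eq_horizon]

lemma upValue_congr (hR : GoodKernels T R) (hf : AdaptedProc T f) {ω ω' : ℕ → Ω₁}
    (h : ∀ j < t, ω j = ω' j) : upValue T R f t ω = upValue T R f t ω' :=
  iInf_congr fun τ => NE_congr_path hR (fun _ _ => τ.2.payoff_congr hf) h

lemma NE_upValue (hR : GoodKernels T R) (hf : AdaptedProc T f) (ω : ℕ → Ω₁) :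
    NE T R t (upValue T R f t) ω = upValue T R f t ω :=
  NE_eq_self hR fun _ hp => upValue_congr hR hf hp

lemma NE_upValue_succ (hR : GoodKernels T R) (hf : AdaptedProc T f) (ht : t < T)
    (ω : ℕ → Ω₁) : NE T R t (upValue T R f (t + 1)) ω =
      upperExp (R t ω) (fun x => upValue T R f (t + 1) (update ω t x)) := by
  rw [NE_of_lt ht]
  simp_rw [NE_upValue hR hf]

lemma NE_stopped_of_eq (hR : GoodKernels T R) (hf : AdaptedProc T f) (ht : t ≤ T)
    (hτ : IsStopAt T t τ) {ω : ℕ → Ω₁} (hω : τ ω = t) :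
    NE T R t (fun p => f (τ p) p) ω = f t ω := by
  refine (NE_eq_self hR fun p hp => ?_).trans (by rw [hω])
  rw [hτ.2 t ω p (fun j hj => (hp j hj).symm) hω, hω]
  exact hf t ht p ω hp

lemma upValue_le_payoff (hR : GoodKernels T R) (hf : AdaptedProc T f) (ht : t ≤ T)
    (ω : ℕ → Ω₁) : upValue T R f t ω ≤ f t ω :=
  (upValue_le hR hf (IsStopAt.const le_rfl ht) ω).trans_eq
    (NE_stopped_of_eq hR hf ht (IsStopAt.const le_rfl ht) rfl)

lemma upValue_le_NE_upValue_succ (hR : GoodKernels T R) (hf : AdaptedProc T f) (ht : t < T)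
    (ω : ℕ → Ω₁) : upValue T R f t ω ≤ NE T R t (upValue T R f (t + 1)) ω := by
  obtain ⟨hne, hS, -⟩ := hR t ht ω
  refine le_of_forall_pos_le_add fun ε hε => ?_
  choose τ hτ hτε using fun x => exists_isStopAt_lt_upValue_add (R := R) (f := f) ht (update ω t x) hε
  calc upValue T R f t ω ≤ NE T R t (fun p => f (τ (p t) p) p) ω :=
        upValue_le hR hf (IsStopAt.paste hτ) ω
    _ = upperExp (R t ω) (fun x => NE T R (t + 1) (fun p => f (τ x p) p) (update ω t x)) := by
        rw [NE_of_lt ht]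
        congr 1
        funext x
        refine NE_congr_fun fun p hp => ?_
        rw [hp t (Nat.lt_succ_self t), update_self]
    _ ≤ upperExp (R t ω) (fun x => upValue T R f (t + 1) (update ω t x) + ε) :=
        upperExp_mono hne hS fun x => (hτε x).le
    _ ≤ upperExp (R t ω) (fun x => upValue T R f (t + 1) (update ω t x)) + ε :=
        upperExp_add_const_le hne hS ε
    _ = NE T R t (upValue T R f (t + 1)) ω + ε := by rw [NE_upValue_succ hR hf ht]

lemma NE_upValue_succ_le_of_ne (hR : GoodKernels T R) (hf : AdaptedProc T f) (ht : t < T)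
    (hτ : IsStopAt T t τ) {ω : ℕ → Ω₁} (hω : τ ω ≠ t) :
    NE T R t (upValue T R f (t + 1)) ω ≤ NE T R t (fun p => f (τ p) p) ω := by
  rw [NE_upValue_succ hR hf ht, NE_of_lt ht]
  refine upperExp_mono (hR t ht ω).1 (hR t ht ω).2.1 fun x => ?_
  refine (upValue_le hR hf (hτ.max_succ ht) _).trans_eq (NE_congr_fun fun p hp => ?_)
  rw [max_eq_right (hτ.succ_le_of_ne hω (agree_of_agree_update hp))]

lemma min_le_upValue (hR : GoodKernels T R) (hf : AdaptedProc T f) (ht : t < T)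
    (ω : ℕ → Ω₁) : min (f t ω) (NE T R t (upValue T R f (t + 1)) ω) ≤ upValue T R f t ω := by
  have : Nonempty {τ : (ℕ → Ω₁) → ℕ // IsStopAt T t τ} := ⟨⟨_, IsStopAt.const ht.le le_rfl⟩⟩
  refine le_ciInf fun ⟨τ, hτ⟩ => ?_
  by_cases hω : τ ω = t
  · exact (min_le_left _ _).trans (NE_stopped_of_eq hR hf ht.le hτ hω).ge
  · exact (min_le_right _ _).trans (NE_upValue_succ_le_of_ne hR hf ht hτ hω)

end UpValue

theorem stmt9_general {Ω₁ : Type*} [Fintype Ω₁] (T : ℕ)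
    (R : ℕ → (ℕ → Ω₁) → Set (Ω₁ → ℝ)) (f : ℕ → (ℕ → Ω₁) → ℝ)
    (hR : GoodKernels T R) (hf : AdaptedProc T f) :
    (∀ ω, upValue T R f T ω = f T ω) ∧
    (∀ t, t < T → ∀ ω,
      upValue T R f t ω = min (f t ω) (NE T R t (upValue T R f (t + 1)) ω)) :=
  ⟨upValue_horizon, fun _ ht ω => le_antisymm
    (le_min (upValue_le_payoff hR hf ht.le ω) (upValue_le_NE_upValue_succ hR hf ht ω))
    (min_le_upValue hR hf ht ω)⟩

/-- Backward dynamic programming recursion for the adverse optimal stopping problem: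
`X T = f T` and `X t = min (f t) (𝓔_t X_{t+1})`. -/
theorem stmt9 {Ω₁ : Type*} [Fintype Ω₁] [Nonempty Ω₁] (T : ℕ)
    (R : ℕ → (ℕ → Ω₁) → Set (Ω₁ → ℝ)) (f : ℕ → (ℕ → Ω₁) → ℝ)
    (hR : GoodKernels T R) (hf : AdaptedProc T f) :
    (∀ ω, upValue T R f T ω = f T ω) ∧
    (∀ t, t < T → ∀ ω,
      upValue T R f t ω = min (f t ω) (NE T R t (upValue T R f (t + 1)) ω)) :=
  stmt9_general T R f hR hf
end

section
/- No-arbitrage implies 0 is in the relative interior of attainable option prices: suppose NA$(\mathcal{P})$ holds and for every $h \in \mathbb{R}^e$, the super-hedging price of $h \cdot g$ using only dynamic trading equals $\sup_{Q \in \mathcal{M}} E_Q[h \cdot g]$ and is attained by some $H \in \mathcal{H}$ with $(H\cdot S)_T \ge h\cdot g$ $\mathcal{P}$-q.s. If additionally each $g_i$ has price 0 under every $Q \in \mathcal{Q} \ne \emptyset$, then $0$ is in the relative interior of the convex set $\{E_Q[g] : Q \in \mathcal{M}\} \subset \mathbb{R}^e$. Equivalently: there is no $h \in \mathbb{R}^e$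 with $E_Q[h \cdot g] \le 0$ for all $Q \in \mathcal{M}$ and $E_{\bar Q}[h \cdot g] < 0$ for some $\bar Q \in \mathcal{M}$. -/
/-!
Super-hedge the claim `h·g` by a dynamic gain `w`. Then `w - h·g ≥ 0` quasi-surely, so by
no-arbitrage `w = h·g` quasi-surely, hence `Q̄`-a.s. since `Q̄` is dominated by a model. As `w`
has zero expectation under every martingale measure, `E_{Q̄}[h·g] = 0`, so it cannot be negative.
-/

open MeasureTheory

section QuasiSure

variable {Ω : Type*} [MeasurableSpace Ω] {P : Set (Measure Ω)} {f w : Ω → ℝ}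

lemma forall_ae_eq_of_forall_ae_le_of_noArbitrage
    (hNA : (∀ p ∈ P, ∀ᵐ ω ∂p, 0 ≤ w ω - f ω) → ∀ p ∈ P, ∀ᵐ ω ∂p, w ω - f ω = 0)
    (hle : ∀ p ∈ P, ∀ᵐ ω ∂p, f ω ≤ w ω) :
    ∀ p ∈ P, f =ᵐ[p] w := by
  intro p hp
  filter_upwards [hNA (fun p hp ↦ (hle p hp).mono fun _ ↦ sub_nonneg.mpr) p hp] with ω hω
  exact (sub_eq_zero.mp hω).symm

lemma integral_congr_of_forall_ae_eq_of_absolutelyContinuous {Q : Measure Ω}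
    (hQ : ∃ p ∈ P, Q ≪ p) (heq : ∀ p ∈ P, f =ᵐ[p] w) :
    ∫ ω, f ω ∂Q = ∫ ω, w ω ∂Q := by
  obtain ⟨p, hp, hQp⟩ := hQ
  exact integral_congr_ae (hQp.ae_le (heq p hp))

end QuasiSure

/-- `W` is the set of terminal gains of dynamic trading strategies, `P` the set of models,
`hNA` is NA(𝓟), and `hsuper` is the super-hedging duality with attainment. -/
theorem stmt15_general {Ω : Type*} [MeasurableSpace Ω] (e : ℕ)
    (P M : Set (Measure Ω)) (W : Set (Ω → ℝ)) (g : Ω → Fin e → ℝ)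
    (hdom : ∀ Q ∈ M, ∃ p ∈ P, Q ≪ p)
    (hmart : ∀ w ∈ W, ∀ Q ∈ M, ∫ ω, w ω ∂Q = 0)
    (hNA : ∀ w ∈ W, ∀ h : Fin e → ℝ,
      (∀ p ∈ P, ∀ᵐ ω ∂p, 0 ≤ w ω + ∑ i, h i * g ω i) →
      (∀ p ∈ P, ∀ᵐ ω ∂p, w ω + ∑ i, h i * g ω i = 0))
    (hsuper : ∀ h : Fin e → ℝ,
      (∀ Q ∈ M, ∫ ω, (∑ i, h i * g ω i) ∂Q ≤ 0) →
      ∃ w ∈ W, ∀ p ∈ P, ∀ᵐ ω ∂p, (∑ i, h i * g ω i) ≤ w ω) :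
    ¬∃ h : Fin e → ℝ,
      (∀ Q ∈ M, ∫ ω, (∑ i, h i * g ω i) ∂Q ≤ 0) ∧
      ∃ Qb ∈ M, ∫ ω, (∑ i, h i * g ω i) ∂Qb < 0 := by
  rintro ⟨h, hle, Qb, hQb, hneg⟩
  obtain ⟨w, hw, hwle⟩ := hsuper h hle
  have hshort : ∀ ω, w ω + ∑ i, (-h) i * g ω i = w ω - ∑ i, h i * g ω i := fun ω ↦ by
    simp only [Pi.neg_apply, neg_mul, Finset.sum_neg_distrib, sub_eq_add_neg]
  have hNAshort := hNA w hw (-h)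
  simp only [hshort] at hNAshort
  have hrepl := forall_ae_eq_of_forall_ae_le_of_noArbitrage hNAshort hwle
  rw [integral_congr_of_forall_ae_eq_of_absolutelyContinuous (hdom Qb hQb) hrepl,
    hmart w hw Qb hQb] at hneg
  exact hneg.false

/-- No-arbitrage implies `0` lies in the relative interior of the attainable option
prices `{E_Q[g] : Q ∈ 𝓜}`; equivalently, there is no `h ∈ ℝᵉ` with
`E_Q[h·g] ≤ 0` for all `Q ∈ 𝓜` and `E_{Q̄}[h·g] < 0` for some `Q̄ ∈ 𝓜`.
Here `W` is the set of terminal gains of dynamic trading strategies (which have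
zero expectation under every martingale measure `Q ∈ 𝓜`), `P` the set of models,
`hNA` is NA(𝓟), and `hsuper` is the super-hedging duality with attainment. -/
theorem stmt15 {Ω : Type*} [MeasurableSpace Ω] (e : ℕ)
    (P M : Set (Measure Ω)) (W : Set (Ω → ℝ)) (g : Ω → Fin e → ℝ)
    (hMprob : ∀ Q ∈ M, IsProbabilityMeasure Q)
    (hdom : ∀ Q ∈ M, ∃ p ∈ P, Q ≪ p)
    (hgint : ∀ Q ∈ M, ∀ i : Fin e, Integrable (fun ω => g ω i) Q)
    (hWint : ∀ w ∈ W, ∀ Q ∈ M, Integrable w Q)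
    (hmart : ∀ w ∈ W, ∀ Q ∈ M, ∫ ω, w ω ∂Q = 0)
    (hQne : ∃ Q ∈ M, ∀ i : Fin e, ∫ ω, g ω i ∂Q = 0)
    (hNA : ∀ w ∈ W, ∀ h : Fin e → ℝ,
      (∀ p ∈ P, ∀ᵐ ω ∂p, 0 ≤ w ω + ∑ i, h i * g ω i) →
      (∀ p ∈ P, ∀ᵐ ω ∂p, w ω + ∑ i, h i * g ω i = 0))
    (hsuper : ∀ h : Fin e → ℝ,
      (∀ Q ∈ M, ∫ ω, (∑ i, h i * g ω i) ∂Q ≤ 0) →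
      ∃ w ∈ W, ∀ p ∈ P, ∀ᵐ ω ∂p, (∑ i, h i * g ω i) ≤ w ω) :
    ¬∃ h : Fin e → ℝ,
      (∀ Q ∈ M, ∫ ω, (∑ i, h i * g ω i) ∂Q ≤ 0) ∧
      ∃ Qb ∈ M, ∫ ω, (∑ i, h i * g ω i) ∂Qb < 0 :=
  stmt15_general e P M W g hdom hmart hNA hsuper
end
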